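/- Let U = (P ∪ Q, Ẽ) be an undirected bipartite graph and let (G,σ) be the 2-colored digraph constructed from U as follows: V(G) = P ∪ Q ∪ R ∪ {b} ∪ {w} where R = {r1,…,r|Q|} is a copy of Q = {q1,…,q|Q|}; all vertices of P, all vertices of R, and b are colored black, and all vertices of Q and w are colored white; the arcs are (q_i,r_i) and (r_i,q_i) for 1 ≤ i ≤ |Q|, (p_i,w) for every p_i ∈ P, (w,b) and (b,w), and (p,q) for every edge {p,q} ∈ Ẽ. If F is a minimum-sized arc completion set such that (G+F,σ) is a best match graph, then F ⊆ P×Q. -/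

import Mathlib

/-- A rooted (phylogenetic) tree on leaf set `V`, encoded by its hierarchy of
clusters `L(T(v))`, `v ∈ V(T)`: a rooted tree on leaf set `V` corresponds
exactly to a family of nonempty, pairwise compatible subsets of `V` containing
all singletons and `V` itself.  Together with a coloring `σ : V → M` this is a
leaf-colored tree. -/
structure PhyloTree (V : Type) where
  clusters : Set (Set V)
  compat : ∀ p ∈ clusters, ∀ q ∈ clusters, p ⊆ q ∨ q ⊆ p ∨ p ∩ q = ∅
  singleton_mem : ∀ v : V, {v} ∈ clusters
  univ_mem : Set.univ ∈ clusters
  nonempty_mem : ∀ p ∈ clusters, p.Nonempty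

namespace PhyloTree

variable {V M : Type}

/-- The cluster `L(T(lca(x,y)))` of the last common ancestor of `x` and `y`;
for inner vertices `u,v` of a tree one has `u ⪯_T v ↔ L(T(u)) ⊆ L(T(v))`. -/
def lcaSet (T : PhyloTree V) (x y : V) : Set V :=
  ⋂₀ {p : Set V | p ∈ T.clusters ∧ x ∈ p ∧ y ∈ p}

/-- `T` displays the triple `xy|z`, i.e. `lca(x,y) ≺ lca(x,z) = lca(y,z)`. -/
def Displays (T : PhyloTree V) (x y z : V) : Prop :=
  T.lcaSet x y ⊂ T.lcaSet x z ∧ T.lcaSet x z = T.lcaSet y z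

/-- `y` is a best match of `x` in the leaf-colored tree `(T,σ)`. -/
def BestMatch (T : PhyloTree V) (σ : V → M) (x y : V) : Prop :=
  σ x ≠ σ y ∧ ∀ y' : V, σ y' = σ y → T.lcaSet x y ⊆ T.lcaSet x y'

end PhyloTree

variable {V M : Type}

/-- `(T,σ)` explains `(G,σ)`, i.e. `(G,σ) = G(T,σ)`. -/
def Explains (T : PhyloTree V) (σ : V → M) (G : V → V → Prop) : Prop :=
  ∀ x y : V, G x y ↔ T.BestMatch σ x y

/-- `(G,σ)` is a best match graph. -/
def IsBMG (G : V → V → Prop) (σ : V → M) : Prop :=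
  ∃ T : PhyloTree V, Explains T σ G

/-- The triple `xy|y'` is informative for `(G,σ)`. -/
def InformativeTriple (G : V → V → Prop) (σ : V → M) (x y y' : V) : Prop :=
  x ≠ y ∧ x ≠ y' ∧ y ≠ y' ∧ σ x ≠ σ y ∧ σ y = σ y' ∧ G x y ∧ ¬ G x y'

/-- The triple `xy|y'` is forbidden for `(G,σ)`. -/
def ForbiddenTriple (G : V → V → Prop) (σ : V → M) (x y y' : V) : Prop :=
  x ≠ y ∧ x ≠ y' ∧ y ≠ y' ∧ σ x ≠ σ y ∧ σ y = σ y' ∧ G x y ∧ G x y'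

/-- `(G,σ)` is sf-colored: `σ` is proper and every vertex has an out-neighbor
of every color present in the graph other than its own. -/
def SfColored (G : V → V → Prop) (σ : V → M) : Prop :=
  (∀ x y : V, G x y → σ x ≠ σ y) ∧
  ∀ (x : V) (s : M), (∃ v : V, σ v = s) → s ≠ σ x → ∃ y : V, σ y = s ∧ G x y

/-- Vertex set of the graph constructed in the reduction from Chain Graph
Completion: `P ∪ Q ∪ R ∪ {b} ∪ {w}`, where `R` is a copy of `Q`, the vertex
`b = Sum.inr (Sum.inr (Sum.inr true))` and `w = Sum.inr (Sum.inr (Sum.inr false))`. -/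
abbrev CGCVert (P Q : Type) : Type := P ⊕ Q ⊕ Q ⊕ Bool

/-- The coloring: vertices of `P`, of `R` and `b` are black (`true`); vertices
of `Q` and `w` are white (`false`). -/
def cgcColor {P Q : Type} : CGCVert P Q → Bool
  | Sum.inl _ => true
  | Sum.inr (Sum.inl _) => false
  | Sum.inr (Sum.inr (Sum.inl _)) => true
  | Sum.inr (Sum.inr (Sum.inr c)) => c

/-- Arcs of the reduction graph constructed from the bipartite graph with edge
relation `E0` between `P` and `Q`: `(q_i,r_i)`, `(r_i,q_i)`, `(p,w)` for every
`p ∈ P`, `(w,b)`, `(b,w)`, and `(p,q)` for every edge `{p,q}` of `U`. -/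
def cgcArcs {P Q : Type} (E0 : P → Q → Prop) : CGCVert P Q → CGCVert P Q → Prop
  | Sum.inl p, Sum.inr (Sum.inl q) => E0 p q
  | Sum.inl _, Sum.inr (Sum.inr (Sum.inr c)) => c = false
  | Sum.inr (Sum.inl q), Sum.inr (Sum.inr (Sum.inl q')) => q = q'
  | Sum.inr (Sum.inr (Sum.inl q')), Sum.inr (Sum.inl q) => q' = q
  | Sum.inr (Sum.inr (Sum.inr c)), Sum.inr (Sum.inr (Sum.inr c')) => c ≠ c'
  | _, _ => False

/-- The bipartite graph on `P ∪ Q` with edge relation `E0` is a chain graph: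
there is a linear order on `P` along which the neighborhoods are nested. -/
def IsChainGraph {P Q : Type} (E0 : P → Q → Prop) : Prop :=
  ∃ l : LinearOrder P, ∀ u v : P, l.le u v → ∀ q : Q, E0 u q → E0 v q

/-!
In a BMG, two vertices `x, x'` with a common best match `z` have nested sets of best matches of
colour `σ z`, because the clusters `lca(x, z)` and `lca(x', z)` are comparable. In `G + F` every
`p ∈ P` has the arc `(p, w)`, so the neighbourhoods of the vertices of `P` in `Q` form a chain:
`E0` together with the `P × Q`-arcs of `F` is a chain graph. Conversely, the reduction graph of a
chain graph is a BMG, explained by the hierarchy of the cherries `{q, r_q}`, `{w, b}` and, for each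
`p ∈ P`, of the vertices that see only neighbours of `p`. Hence the `P × Q`-arcs of `F` alone form
a completion set, and minimality of `F` forces `F` to consist of them.
-/

namespace PhyloTree

section lcaSet

variable (T : PhyloTree V)

theorem mem_lcaSet_right (x y : V) : y ∈ T.lcaSet x y :=
  fun _ hS => hS.2.2

theorem lcaSet_subset {x y : V} {S : Set V} (hS : S ∈ T.clusters) (hx : x ∈ S) (hy : y ∈ S) :
    T.lcaSet x y ⊆ S :=
  Set.sInter_subset_of_mem ⟨hS, hx, hy⟩

theorem lcaSet_subset_lcaSet_of_mem {x y z : V} (hz : z ∈ T.lcaSet x y) :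
    T.lcaSet x z ⊆ T.lcaSet x y :=
  Set.subset_sInter fun _ ⟨hS, hx, hy⟩ => T.lcaSet_subset hS hx (T.lcaSet_subset hS hx hy hz)

theorem lcaSet_total (x y z : V) :
    T.lcaSet x z ⊆ T.lcaSet y z ∨ T.lcaSet y z ⊆ T.lcaSet x z := by
  refine or_iff_not_imp_right.mpr fun h => ?_
  obtain ⟨S, ⟨hS, hxS, hzS⟩, hyzS⟩ :
      ∃ S ∈ {p | p ∈ T.clusters ∧ x ∈ p ∧ z ∈ p}, ¬ T.lcaSet y z ⊆ S := by
    simpa only [not_forall, exists_prop] using mt Set.subset_sInter h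
  have hyS : y ∉ S := fun hyS => hyzS (T.lcaSet_subset hS hyS hzS)
  refine Set.subset_sInter fun S' ⟨hS', hyS', hzS'⟩ => ?_
  rcases T.compat S hS S' hS' with hSS' | hS'S | hdisj
  · exact T.lcaSet_subset hS' (hSS' hxS) hzS'
  · exact absurd (hS'S hyS') hyS
  · exact (Set.eq_empty_iff_forall_notMem.mp hdisj z ⟨hzS, hzS'⟩).elim

end lcaSet

theorem BestMatch.of_lcaSet_subset {T : PhyloTree V} {σ : V → M} {x x' y z : V}
    (hxy : T.BestMatch σ x y) (hx'z : T.BestMatch σ x' z) (hσ : σ y = σ z)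
    (hsub : T.lcaSet x z ⊆ T.lcaSet x' z) : T.BestMatch σ x' y := by
  have hy : y ∈ T.lcaSet x' z := hsub (hxy.2 z hσ.symm (T.mem_lcaSet_right x y))
  exact ⟨hσ ▸ hx'z.1, fun y' hy' =>
    (T.lcaSet_subset_lcaSet_of_mem hy).trans (hx'z.2 y' (hy'.trans hσ))⟩

section ofLaminar

variable [Nonempty V] (m : V → Set V) (hself : ∀ v, v ∈ m v)
  (hlam : ∀ u v, m u ⊆ m v ∨ m v ⊆ m u ∨ m u ∩ m v = ∅)

def ofLaminar : PhyloTree V where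
  clusters := {S | (∃ v, S = {v}) ∨ (∃ v, S = m v) ∨ S = Set.univ}
  compat := by
    have hsingle (v : V) (S : Set V) : {v} ⊆ S ∨ {v} ∩ S = ∅ :=
      (em (v ∈ S)).imp Set.singleton_subset_iff.2 Set.singleton_inter_eq_empty.2
    rintro A (⟨u, rfl⟩ | ⟨u, rfl⟩ | rfl) B hB
    · exact (hsingle u B).imp_right Or.inr
    · rcases hB with ⟨v, rfl⟩ | ⟨v, rfl⟩ | rfl
      · rw [Set.inter_comm]
        exact (hsingle v (m u)).elim (Or.inr ∘ Or.inl) (Or.inr ∘ Or.inr)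
      · exact hlam u v
      · exact Or.inl (Set.subset_univ _)
    · exact Or.inr (Or.inl (Set.subset_univ _))
  singleton_mem v := Or.inl ⟨v, rfl⟩
  univ_mem := Or.inr (Or.inr rfl)
  nonempty_mem := by
    rintro S (⟨v, rfl⟩ | ⟨v, rfl⟩ | rfl)
    exacts [Set.singleton_nonempty v, ⟨v, hself v⟩, Set.univ_nonempty]

variable (hclosed : ∀ u v, v ∈ m u → m v ⊆ m u)
include hclosed

theorem subset_lcaSet_ofLaminar {x y : V} (hyx : y ≠ x) :
    m x ⊆ (ofLaminar m hself hlam).lcaSet x y := by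
  refine Set.subset_sInter ?_
  rintro S ⟨⟨v, rfl⟩ | ⟨v, rfl⟩ | rfl, hx, hy⟩
  · exact absurd (hy.trans hx.symm) hyx
  · exact hclosed v x hx
  · exact Set.subset_univ _

theorem lcaSet_ofLaminar {x y : V} (hyx : y ≠ x) (hy : y ∈ m x) :
    (ofLaminar m hself hlam).lcaSet x y = m x :=
  subset_antisymm (lcaSet_subset _ (Or.inr (Or.inl ⟨x, rfl⟩)) (hself x) hy)
    (subset_lcaSet_ofLaminar m hself hlam hclosed hyx)

theorem ofLaminar_bestMatch_iff {σ : V → M}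
    (hcol : ∀ x y, σ x ≠ σ y → ∃ y₀ ∈ m x, σ y₀ = σ y) {x y : V} :
    (ofLaminar m hself hlam).BestMatch σ x y ↔ σ x ≠ σ y ∧ y ∈ m x := by
  constructor
  · rintro ⟨hσ, hbest⟩
    obtain ⟨y₀, hy₀, hσ₀⟩ := hcol x y hσ
    refine ⟨hσ, ?_⟩
    rw [← lcaSet_ofLaminar m hself hlam hclosed (ne_of_apply_ne σ (hσ₀ ▸ hσ.symm)) hy₀]
    exact hbest y₀ hσ₀ (mem_lcaSet_right _ x y)
  · rintro ⟨hσ, hy⟩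
    refine ⟨hσ, fun y' hy' => ?_⟩
    rw [lcaSet_ofLaminar m hself hlam hclosed (ne_of_apply_ne σ hσ.symm) hy]
    exact subset_lcaSet_ofLaminar m hself hlam hclosed (ne_of_apply_ne σ (hy' ▸ hσ.symm))

end ofLaminar

end PhyloTree

theorem IsBMG.outNeighbors_total {G : V → V → Prop} {σ : V → M}
    (hG : IsBMG G σ) {x x' z : V} (hx : G x z) (hx' : G x' z) :
    (∀ y, σ y = σ z → G x y → G x' y) ∨ (∀ y, σ y = σ z → G x' y → G x y) := by
  obtain ⟨T, hT⟩ := hG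
  unfold Explains at hT
  simp only [hT] at hx hx' ⊢
  exact (T.lcaSet_total x x' z).imp (fun h _ hσ hy => hy.of_lcaSet_subset hx' hσ h)
    (fun h _ hσ hy => hy.of_lcaSet_subset hx hσ h)

open Sum

variable {P Q : Type}

/-- The vertices of `Q` seen by a vertex of the reduction graph: its neighbours for `p ∈ P`,
the vertex itself or its original for `q` and `r_q`, none for `b` and `w`. -/
def cgcShadow (E : P → Q → Prop) : CGCVert P Q → Set Q
  | inl p => {q | E p q}
  | inr (inl q) => {q}
  | inr (inr (inl q)) => {q}
  | inr (inr (inr _)) => ∅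

/-- The least non-singleton cluster containing a vertex in the tree explaining the reduction
graph of a chain graph: the cherries `{q, r_q}` and `{w, b}`, and for `p ∈ P` the cluster of its
parent, which collects everything whose shadow lies in the neighbourhood of `p`. -/
def cgcCluster (E : P → Q → Prop) : CGCVert P Q → Set (CGCVert P Q)
  | inl p => {x | cgcShadow E x ⊆ {q | E p q}}
  | inr u => {x | x.isRight ∧ cgcShadow E x = cgcShadow E (inr u)}

theorem mem_cgcCluster_self (E : P → Q → Prop) (u : CGCVert P Q) : u ∈ cgcCluster E u := by
  rcases u with p | u
  exacts [Set.Subset.rfl, ⟨rfl, rfl⟩]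

theorem cgcCluster_laminar {E : P → Q → Prop}
    (hE : IsChain (· ⊆ ·) (Set.range fun p => {q | E p q})) (u v : CGCVert P Q) :
    cgcCluster E u ⊆ cgcCluster E v ∨ cgcCluster E v ⊆ cgcCluster E u ∨
      cgcCluster E u ∩ cgcCluster E v = ∅ := by
  have mixed (p : P) (v : Q ⊕ Q ⊕ Bool) : cgcCluster E (inr v) ⊆ cgcCluster E (inl p) ∨
      cgcCluster E (inl p) ∩ cgcCluster E (inr v) = ∅ := by
    by_cases h : cgcShadow E (inr v) ⊆ {q | E p q}
    · exact Or.inl fun x hx => show cgcShadow E x ⊆ {q | E p q} from hx.2 ▸ h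
    · exact Or.inr (Set.eq_empty_iff_forall_notMem.2 fun x hx => h (hx.2.2 ▸ hx.1))
  rcases u with p | u <;> rcases v with p' | v
  · rcases hE.total ⟨p, rfl⟩ ⟨p', rfl⟩ with h | h
    exacts [Or.inl fun x hx => Set.Subset.trans hx h,
      Or.inr (Or.inl fun x hx => Set.Subset.trans hx h)]
  · exact (mixed p v).elim (Or.inr ∘ Or.inl) (Or.inr ∘ Or.inr)
  · rw [Set.inter_comm]
    exact (mixed p' u).imp_right Or.inr
  · by_cases h : cgcShadow E (inr u) = cgcShadow E (inr v)
    · exact Or.inl fun x hx => ⟨hx.1, hx.2.trans h⟩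
    · exact Or.inr (Or.inr (Set.eq_empty_iff_forall_notMem.2 fun x hx =>
        h (hx.1.2.symm.trans hx.2.2)))

theorem cgcCluster_subset_of_mem {E : P → Q → Prop} {u v : CGCVert P Q}
    (hv : v ∈ cgcCluster E u) : cgcCluster E v ⊆ cgcCluster E u := by
  rcases u with p | u <;> rcases v with p' | v <;> intro x hx
  · exact Set.Subset.trans hx hv
  · exact show cgcShadow E x ⊆ {q | E p q} from hx.2 ▸ hv
  · exact absurd hv.1 Bool.false_ne_true
  · exact ⟨hx.1, hx.2.trans hv.2⟩

theorem exists_mem_cgcCluster_color_eq (E : P → Q → Prop) {x y : CGCVert P Q}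
    (hσ : cgcColor x ≠ cgcColor y) : ∃ y₀ ∈ cgcCluster E x, cgcColor y₀ = cgcColor y := by
  rw [Bool.eq_not_iff.2 hσ.symm]
  rcases x with p | q | q | c
  · exact ⟨inr (inr (inr false)), by simp [cgcCluster, cgcShadow, cgcColor]⟩
  · exact ⟨inr (inr (inl q)), by simp [cgcCluster, cgcShadow, cgcColor]⟩
  · exact ⟨inr (inl q), by simp [cgcCluster, cgcShadow, cgcColor]⟩
  · exact ⟨inr (inr (inr !c)), by simp [cgcCluster, cgcShadow, cgcColor]⟩

theorem cgcArcs_iff_mem_cgcCluster (E : P → Q → Prop) (x y : CGCVert P Q) :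
    cgcArcs E x y ↔ cgcColor x ≠ cgcColor y ∧ y ∈ cgcCluster E x := by
  rcases x with p | q | q | c <;> rcases y with p' | q' | q' | c' <;>
    simp [cgcArcs, cgcColor, cgcCluster, cgcShadow] <;> exact eq_comm

theorem isBMG_cgcArcs {E : P → Q → Prop}
    (hE : IsChain (· ⊆ ·) (Set.range fun p => {q | E p q})) : IsBMG (cgcArcs E) cgcColor :=
  ⟨.ofLaminar (cgcCluster E) (mem_cgcCluster_self E) (cgcCluster_laminar hE), fun x y => by
    rw [cgcArcs_iff_mem_cgcCluster, PhyloTree.ofLaminar_bestMatch_iff _ _ _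
      (fun _ _ => cgcCluster_subset_of_mem) (fun _ _ => exists_mem_cgcCluster_color_eq E)]⟩

theorem isChain_of_isBMG {H : CGCVert P Q → CGCVert P Q → Prop} (hH : IsBMG H cgcColor)
    (hw : ∀ p, H (inl p) (inr (inr (inr false)))) :
    IsChain (· ⊆ ·) (Set.range fun p => {q | H (inl p) (inr (inl q))}) := by
  rintro _ ⟨p, rfl⟩ _ ⟨p', rfl⟩ -
  exact (hH.outNeighbors_total (hw p) (hw p')).imp (fun h q => h _ rfl) (fun h q => h _ rfl)

def IsPQArc (e : CGCVert P Q × CGCVert P Q) : Prop :=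
  ∃ p q, e = (inl p, inr (inl q))

theorem cgcArcs_or_mem_filter_isPQArc (E : P → Q → Prop)
    (F : Finset (CGCVert P Q × CGCVert P Q)) [DecidablePred (IsPQArc (P := P) (Q := Q))] :
    (fun u v => cgcArcs E u v ∨ (u, v) ∈ F.filter IsPQArc) =
      cgcArcs (fun p q => E p q ∨ (inl p, inr (inl q)) ∈ F) := by
  funext u v
  rcases u with p | q | q | c <;> rcases v with p' | q' | q' | c' <;>
    simp [cgcArcs, IsPQArc]

theorem cgc_minimum_completion_subset_PQ_general {P Q : Type}
    (E0 : P → Q → Prop)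
    (F : Finset (CGCVert P Q × CGCVert P Q))
    (hnonarc : ∀ p ∈ F, ¬ cgcArcs E0 p.1 p.2 ∧ p.1 ≠ p.2)
    (hbmg : IsBMG (fun u v => cgcArcs E0 u v ∨ (u, v) ∈ F) cgcColor)
    (hmin : ∀ F' : Finset (CGCVert P Q × CGCVert P Q),
      (∀ p ∈ F', ¬ cgcArcs E0 p.1 p.2 ∧ p.1 ≠ p.2) →
      IsBMG (fun u v => cgcArcs E0 u v ∨ (u, v) ∈ F') cgcColor →
      F.card ≤ F'.card) :
    ∀ p ∈ F, ∃ (pp : P) (qq : Q), p = (Sum.inl pp, Sum.inr (Sum.inl qq)) := by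
  classical
  have hPQ : IsBMG (fun u v => cgcArcs E0 u v ∨ (u, v) ∈ F.filter IsPQArc) cgcColor := by
    rw [cgcArcs_or_mem_filter_isPQArc]
    exact isBMG_cgcArcs (isChain_of_isBMG hbmg fun _ => Or.inl rfl)
  have hF : F.filter IsPQArc = F :=
    Finset.eq_of_subset_of_card_le (Finset.filter_subset _ _)
      (hmin _ (fun e he => hnonarc e (Finset.mem_filter.1 he).1) hPQ)
  intro e he
  rw [← hF] at he
  exact (Finset.mem_filter.1 he).2

/-- Every minimum-sized arc completion set `F` turning the CGC
reduction graph into a BMG only contains arcs from `P` to `Q`. -/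
theorem cgc_minimum_completion_subset_PQ {P Q : Type}
    [Fintype P] [Fintype Q] [Nonempty P] [Nonempty Q]
    (E0 : P → Q → Prop)
    (F : Finset (CGCVert P Q × CGCVert P Q))
    (hnonarc : ∀ p ∈ F, ¬ cgcArcs E0 p.1 p.2 ∧ p.1 ≠ p.2)
    (hbmg : IsBMG (fun u v => cgcArcs E0 u v ∨ (u, v) ∈ F) cgcColor)
    (hmin : ∀ F' : Finset (CGCVert P Q × CGCVert P Q),
      (∀ p ∈ F', ¬ cgcArcs E0 p.1 p.2 ∧ p.1 ≠ p.2) →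
      IsBMG (fun u v => cgcArcs E0 u v ∨ (u, v) ∈ F') cgcColor →
      F.card ≤ F'.card) :
    ∀ p ∈ F, ∃ (pp : P) (qq : Q), p = (Sum.inl pp, Sum.inr (Sum.inl qq)) :=
  cgc_minimum_completion_subset_PQ_general E0 F hnonarc hbmg hmin
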